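/- Let I be an interpretation such that L is expressive relative to I, and suppose I ⊨ {p}P(t̄){q}, where P is declared by P(ū)::S ∈ D. Let {x̄} = change(D)\{ū}, let v̄ and z̄ be lists of fresh variables of the same lengths as ū and x̄ respectively, and let Inv ≡ (p ∧ t̄=v̄)[x̄:=z̄]. Then I ⊨ (Inv ∧ ∃ū: SP_I(x̄=z̄ ∧ ū=v̄, S)) → q. -/

import Mathlib

/-! Syntax -/

abbrev Var := ℕ
abbrev PName := ℕ

/-- Expressions: terms of a fixed first-order language. -/
inductive Expr : Type
  | var : Var → Expr
  | fn : ℕ → List Expr → Expr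

/-- Assertions: formulas of the first-order language (with equality). -/
inductive Assertion : Type
  | tru : Assertion
  | eq : Expr → Expr → Assertion
  | rel : ℕ → List Expr → Assertion
  | not : Assertion → Assertion
  | and : Assertion → Assertion → Assertion
  | ex : Var → Assertion → Assertion

/-- Implication, as a derived connective. -/
def Assertion.imp (p q : Assertion) : Assertion := .not (.and p (.not q))

/-- Statements. -/
inductive Stmt : Type
  | skip : Stmt
  | assign : List Var → List Expr → Stmt
  | call : PName → List Expr → Stmt
  | seq : Stmt → Stmt → Stmt
  | ifte : Assertion → Stmt → Stmt → Stmt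
  | wh : Assertion → Stmt → Stmt
  | block : List Var → List Expr → Stmt → Stmt

/-- A set of procedure declarations `P(ū)::S`. -/
abbrev Decls := List (PName × List Var × Stmt)

def lookupD (D : Decls) (P : PName) : Option (List Var × Stmt) :=
  (D.find? (fun d => d.1 == P)).map (·.2)

/-- Well-formedness: exactly one declaration per procedure name. -/
def Decls.Wf (D : Decls) : Prop := (D.map Prod.fst).Nodup

/-! Variables -/

def varsE : Expr → List Var
  | .var x => [x]
  | .fn _ ts => ts.attach.flatMap (fun t => varsE t.1)
decreasing_by
  have := List.sizeOf_lt_of_mem t.2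
  simp only [Expr.fn.sizeOf_spec]
  omega

def varsEs (ts : List Expr) : List Var := ts.flatMap varsE

def varsA : Assertion → List Var
  | .tru => []
  | .eq a b => varsE a ++ varsE b
  | .rel _ ts => varsEs ts
  | .not p => varsA p
  | .and p q => varsA p ++ varsA q
  | .ex x p => x :: varsA p

def freeA : Assertion → List Var
  | .tru => []
  | .eq a b => varsE a ++ varsE b
  | .rel _ ts => varsEs ts
  | .not p => freeA p
  | .and p q => freeA p ++ freeA q
  | .ex x p => (freeA p).filter (· != x)

def varsS : Stmt → List Var
  | .skip => []
  | .assign xs ts => xs ++ varsEs ts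
  | .call _ ts => varsEs ts
  | .seq S₁ S₂ => varsS S₁ ++ varsS S₂
  | .ifte B S₁ S₂ => varsA B ++ varsS S₁ ++ varsS S₂
  | .wh B S => varsA B ++ varsS S
  | .block xs ts S => xs ++ varsEs ts ++ varsS S

/-- Variables occurring in the declarations `D`. -/
def varsD (D : Decls) : List Var := D.flatMap (fun d => d.2.1 ++ varsS d.2.2)

/-- `var(D | S)`. -/
def varsProg (D : Decls) (S : Stmt) : List Var := varsS S ++ varsD D
/-! Semantics -/

/-- An interpretation of the first-order language. -/
structure Interp where
  Dom : Type
  nonempty : Nonempty Dom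
  fn : ℕ → List Dom → Dom
  rel : ℕ → List Dom → Prop

/-- States over an interpretation. -/
abbrev Interp.State (I : Interp) := Var → I.Dom

/-- Simultaneous update of a state at a list of (distinct) variables. -/
def updList {α : Type _} (σ : Var → α) : List Var → List α → Var → α
  | x :: xs, d :: ds => Function.update (updList σ xs ds) x d
  | _, _ => σ

/-- Value of an expression in a state. -/
def evalE (I : Interp) (σ : I.State) : Expr → I.Dom
  | .var x => σ x
  | .fn f ts => I.fn f (ts.attach.map (fun t => evalE I σ t.1))
decreasing_by
  have := List.sizeOf_lt_of_mem t.2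
  simp only [Expr.fn.sizeOf_spec]
  omega

def evalEs (I : Interp) (σ : I.State) (ts : List Expr) : List I.Dom :=
  ts.map (evalE I σ)

/-- Truth of an assertion in a state. -/
def satA (I : Interp) (σ : I.State) : Assertion → Prop
  | .tru => True
  | .eq a b => evalE I σ a = evalE I σ b
  | .rel r ts => I.rel r (evalEs I σ ts)
  | .not p => ¬ satA I σ p
  | .and p q => satA I σ p ∧ satA I σ q
  | .ex x p => ∃ d : I.Dom, satA I (Function.update σ x d) p

/-- `[[p]]_I`, the meaning of an assertion. -/
def meaning (I : Interp) (p : Assertion) : Set I.State := {σ | satA I σ p}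

/-- An assertion true in `I` (in all states). -/
def valid (I : Interp) (p : Assertion) : Prop := ∀ σ : I.State, satA I σ p

/-- Big-step (input/output) semantics of statements w.r.t. declarations `D`;
procifedure calls are interpreted by inlining (call-by-value) and blocks restore
the initial values of their local variables. -/
inductive BigStep (D : Decls) (I : Interp) : Stmt → I.State → I.State → Prop
  | skip {σ} : BigStep D I .skip σ σ
  | assign {xs ts σ} : BigStep D I (.assign xs ts) σ (updList σ xs (evalEs I σ ts))
  | seq {S₁ S₂ σ τ ρ} : BigStep D I S₁ σ τ → BigStep D I S₂ τ ρ →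
      BigStep D I (.seq S₁ S₂) σ ρ
  | ifteT {B S₁ S₂ σ τ} : satA I σ B → BigStep D I S₁ σ τ →
      BigStep D I (.ifte B S₁ S₂) σ τ
  | ifteF {B S₁ S₂ σ τ} : ¬ satA I σ B → BigStep D I S₂ σ τ →
      BigStep D I (.ifte B S₁ S₂) σ τ
  | whT {B S σ τ ρ} : satA I σ B → BigStep D I S σ τ → BigStep D I (.wh B S) τ ρ →
      BigStep D I (.wh B S) σ ρ
  | whF {B S σ} : ¬ satA I σ B → BigStep D I (.wh B S) σ σ
  | block {xs ts S σ τ} : BigStep D I (.seq (.assign xs ts) S) σ τ →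
      BigStep D I (.block xs ts S) σ (updList τ xs (xs.map σ))
  | call {P us S ts σ τ} : lookupD D P = some (us, S) →
      BigStep D I (.block us ts S) σ τ → BigStep D I (.call P ts) σ τ

/-- `M[[S]]`, the meaning of a statement: the set of final states. -/
def Sem (D : Decls) (I : Interp) (S : Stmt) (σ : I.State) : Set I.State :=
  {τ | BigStep D I S σ τ}

/-- `I ⊨ {p} S {q}`: partial correctness. -/
def HoareValid (D : Decls) (I : Interp) (p : Assertion) (S : Stmt) (q : Assertion) : Prop :=
  ∀ σ τ : I.State, satA I σ p → BigStep D I S σ τ → satA I τ q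

/-! `change(D | S)` -/

/-- `change(∅ | S)` (calls contribute nothing). -/
def chgNo : Stmt → List Var
  | .skip => []
  | .assign xs _ => xs
  | .call _ _ => []
  | .seq S₁ S₂ => chgNo S₁ ++ chgNo S₂
  | .ifte _ S₁ S₂ => chgNo S₁ ++ chgNo S₂
  | .wh _ S => chgNo S
  | .block xs _ S => (chgNo S).filter (fun x => !(xs.contains x))

/-- `change(D)`: union of `change(∅ | body)` over the declarations in `D`. -/
def changeD (D : Decls) : List Var := D.flatMap (fun d => chgNo d.2.2)

/-- `change(D | S)`. -/
def chg (D : Decls) : Stmt → List Var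
  | .skip => []
  | .assign xs _ => xs
  | .call P _ =>
      match lookupD D P with
      | some (us, _) => (changeD D).filter (fun x => !(us.contains x))
      | none => []
  | .seq S₁ S₂ => chg D S₁ ++ chg D S₂
  | .ifte _ S₁ S₂ => chg D S₁ ++ chg D S₂
  | .wh _ S => chg D S
  | .block xs _ S => (chg D S).filter (fun x => !(xs.contains x))
/-! Substitution -/

/-- The simultaneous substitution map `[x̄ := t̄]`. -/
def subMap (xs : List Var) (ts : List Expr) : Var → Option Expr :=
  fun y => ((xs.zip ts).find? (fun p => p.1 == y)).map (·.2)

def substE (m : Var → Option Expr) : Expr → Expr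
  | .var x => (m x).getD (.var x)
  | .fn f ts => .fn f (ts.attach.map (fun t => substE m t.1))
decreasing_by
  have := List.sizeOf_lt_of_mem t.2
  simp only [Expr.fn.sizeOf_spec]
  omega

def substA (m : Var → Option Expr) : Assertion → Assertion
  | .tru => .tru
  | .eq a b => .eq (substE m a) (substE m b)
  | .rel r ts => .rel r (ts.map (substE m))
  | .not p => .not (substA m p)
  | .and p q => .and (substA m p) (substA m q)
  | .ex x p => .ex x (substA (fun y => if y = x then none else m y) p)

/-- `p[x̄ := t̄]`. -/
def substList (p : Assertion) (xs : List Var) (ts : List Expr) : Assertion :=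
  substA (subMap xs ts) p

/-- `∃ x̄ : p`. -/
def exList (xs : List Var) (p : Assertion) : Assertion := xs.foldr .ex p

/-- The assertion `x̄ = z̄` for two lists of variables. -/
def eqVars (xs zs : List Var) : Assertion :=
  ((xs.zip zs).map (fun c => Assertion.eq (.var c.1) (.var c.2))).foldr .and .tru

/-- The assertion `t̄ = v̄` for a list of expressions and a list of variables. -/
def eqExprVars (ts : List Expr) (vs : List Var) : Assertion :=
  ((ts.zip vs).map (fun c => Assertion.eq c.1 (.var c.2))).foldr .and .tru

/-! Proof systems -/

abbrev Triple := Assertion × Stmt × Assertion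

/-- Flags selecting the procedure-call related rules of the proof system. -/
structure PSys where
  hasPCall : Bool   -- the PROCEDURE CALL rule
  hasRecG : Bool    -- the RECURSION rule (generic calls)
  hasRecII : Bool   -- the RECURSION II rule (of ABO)

def PSys.ABO : PSys := ⟨false, false, true⟩
def PSys.ABO1 : PSys := ⟨true, false, true⟩
def PSys.CBV : PSys := ⟨true, true, false⟩

/-- All procedure calls occurring in a statement. -/
def callsS : Stmt → List (PName × List Expr)
  | .skip => []
  | .assign _ _ => []
  | .call P ts => [(P, ts)]
  | .seq S₁ S₂ => callsS S₁ ++ callsS S₂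
  | .ifte _ S₁ S₂ => callsS S₁ ++ callsS S₂
  | .wh _ S => callsS S
  | .block _ _ S => callsS S

/-- All procedure calls occurring in the program `(D | S)`. -/
def callsProg (D : Decls) (S : Stmt) : List (PName × List Expr) :=
  callsS S ++ D.flatMap (fun d => callsS d.2.2)

/-- The generic call `P(ū)` of the `i`-th declaration of `D`. -/
def genCall (D : Decls) (i : Fin D.length) : Stmt :=
  .call (D.get i).1 (((D.get i).2.1).map Expr.var)

/-- The assumption set `{p₁}P₁(ū₁){q₁}, …, {pₙ}Pₙ(ūₙ){qₙ}` of generic calls. -/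
def genSet (D : Decls) (pre post : Fin D.length → Assertion) : Set Triple :=
  Set.range (fun i : Fin D.length => (pre i, genCall D i, post i))

/-- The assumption set of the RECURSION II rule. -/
def asmSet (cs : List ((PName × List Expr) × Assertion × Assertion)) : Set Triple :=
  {t | ∃ c ∈ cs, t = (c.2.1, Stmt.call c.1.1 c.1.2, c.2.2)}

/-- `HoareN sys D I Φ n p S q`: the correctness formula `{p}S{q}` is derivable in
the proof system selected by `sys` from the set `Φ` of assumptions and the
assertions true in `I`, using at most `n` applications of axioms and proof rules. -/
inductive HoareN (sys : PSys) (D : Decls) (I : Interp) :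
    Set Triple → ℕ → Assertion → Stmt → Assertion → Prop
  | asm {Φ p S q} : (p, S, q) ∈ Φ → HoareN sys D I Φ 0 p S q
  | skip {Φ p} : HoareN sys D I Φ 1 p .skip p
  | assign {Φ p xs ts} :
      HoareN sys D I Φ 1 (substList p xs ts) (.assign xs ts) p
  | seq {Φ k₁ k₂ p r q S₁ S₂} :
      HoareN sys D I Φ k₁ p S₁ r → HoareN sys D I Φ k₂ r S₂ q →
      HoareN sys D I Φ (k₁ + k₂ + 1) p (.seq S₁ S₂) q
  | ifte {Φ k₁ k₂ p q B S₁ S₂} :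
      HoareN sys D I Φ k₁ (.and p B) S₁ q → HoareN sys D I Φ k₂ (.and p (.not B)) S₂ q →
      HoareN sys D I Φ (k₁ + k₂ + 1) p (.ifte B S₁ S₂) q
  | wh {Φ k p B S} :
      HoareN sys D I Φ k (.and p B) S p →
      HoareN sys D I Φ (k + 1) p (.wh B S) (.and p (.not B))
  | conseq {Φ k p p₁ q₁ q S} :
      valid I (p.imp p₁) → HoareN sys D I Φ k p₁ S q₁ → valid I (q₁.imp q) →
      HoareN sys D I Φ (k + 1) p S q
  | block {Φ k p q xs ts S} :
      (∀ x ∈ xs, x ∉ freeA q) →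
      HoareN sys D I Φ k p (.seq (.assign xs ts) S) q →
      HoareN sys D I Φ (k + 1) p (.block xs ts S) q
  | subst {Φ k p q S} {xs ys : List Var} :
      xs.Nodup → xs.length = ys.length →
      (∀ x ∈ xs, x ∉ varsProg D S) → (∀ y ∈ ys, y ∉ chg D S) →
      HoareN sys D I Φ k p S q →
      HoareN sys D I Φ (k + 1) (substList p xs (ys.map .var)) S (substList q xs (ys.map .var))
  | inv {Φ k p r q S} :
      (∀ x ∈ freeA p, x ∉ chg D S) →
      HoareN sys D I Φ k r S q →
      HoareN sys D I Φ (k + 1) (.and p r) S (.and p q)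
  | exI {Φ k p q S xs} :
      (∀ x ∈ xs, x ∉ varsProg D S ∧ x ∉ freeA q) →
      HoareN sys D I Φ k p S q →
      HoareN sys D I Φ (k + 1) (exList xs p) S q
  | pcall {Φ k p q P us S ts} :
      sys.hasPCall = true →
      lookupD D P = some (us, S) → ts.length = us.length →
      (∀ u ∈ us, u ∉ freeA q) →
      HoareN sys D I Φ k p (.call P (us.map .var)) q →
      HoareN sys D I Φ (k + 1) (substList p us ts) (.call P ts) q
  | recG {Φ p S q k} (pre post : Fin D.length → Assertion) (cnt : Fin D.length → ℕ) :
      sys.hasRecG = true →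
      (∀ i : Fin D.length, ∀ u ∈ (D.get i).2.1, u ∉ freeA (post i)) →
      HoareN sys D I (genSet D pre post) k p S q →
      (∀ i : Fin D.length,
        HoareN sys D I (genSet D pre post) (cnt i) (pre i) (D.get i).2.2 (post i)) →
      HoareN sys D I Φ (k + (∑ i, cnt i) + 1) p S q
  | recII {Φ p S q k} (cs : List ((PName × List Expr) × Assertion × Assertion))
      (cnt : Fin cs.length → ℕ)
      (usf : Fin cs.length → List Var) (Bf : Fin cs.length → Stmt) :
      sys.hasRecII = true →
      (∀ c, c ∈ cs.map Prod.fst ↔ c ∈ callsProg D S) →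
      (∀ i : Fin cs.length, lookupD D (cs.get i).1.1 = some (usf i, Bf i)) →
      HoareN sys D I (asmSet cs) k p S q →
      (∀ i : Fin cs.length,
        HoareN sys D I (asmSet cs) (cnt i)
          (cs.get i).2.1 (.block (usf i) (cs.get i).1.2 (Bf i)) (cs.get i).2.2) →
      HoareN sys D I Φ (k + (∑ i, cnt i) + 1) p S q

/-- `Φ ⊢_{sys,I} {p}S{q}`. -/
def Derivable (sys : PSys) (D : Decls) (I : Interp) (Φ : Set Triple)
    (p : Assertion) (S : Stmt) (q : Assertion) : Prop :=
  ∃ n, HoareN sys D I Φ n p S q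
/-! Strongest postconditions and expressiveness -/

/-- `r` defines the strongest postcondition `sp_I(p, S)` in `I`. -/
def DefinesSP (I : Interp) (D : Decls) (r p : Assertion) (S : Stmt) : Prop :=
  ∀ τ : I.State, satA I τ r ↔ ∃ σ : I.State, satA I σ p ∧ BigStep D I S σ τ

/-- The language is expressive relative to `I` (for the declarations `D`). -/
def Expressive (I : Interp) (D : Decls) : Prop :=
  ∀ (p : Assertion) (S : Stmt), ∃ r : Assertion, DefinesSP I D r p S

/-- `t` is a most general correctness specification for the procedure `P(ū)::S`:
`{x̄=z̄ ∧ ū=v̄} P(ū) {∃ū: SP_I(x̄=z̄ ∧ ū=v̄, S)}`, where `{x̄} = change(D)\{ū}` and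
`v̄, z̄` are lists of fresh variables of the same lengths as `ū` and `x̄`. -/
def IsMGCS (I : Interp) (D : Decls) (P : PName) (us : List Var) (S : Stmt)
    (t : Triple) : Prop :=
  ∃ (xs vs zs : List Var) (SP : Assertion),
    xs.Nodup ∧ (∀ x, x ∈ xs ↔ (x ∈ changeD D ∧ x ∉ us)) ∧
    vs.length = us.length ∧ zs.length = xs.length ∧
    (vs ++ zs).Nodup ∧
    (∀ v ∈ vs ++ zs, v ∉ varsD D ∧ v ∉ us ∧ v ∉ xs) ∧
    DefinesSP I D SP (.and (eqVars xs zs) (eqVars us vs)) S ∧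
    t = (.and (eqVars xs zs) (eqVars us vs),
         Stmt.call P (us.map Expr.var),
         exList us SP)

/-! Sizes of programs and bound on the length of proofs -/

def lS : Stmt → ℕ
  | .skip => 1
  | .assign _ _ => 1
  | .call _ _ => 1
  | .seq S₁ S₂ => lS S₁ + lS S₂ + 1
  | .ifte _ S₁ S₂ => lS S₁ + lS S₂ + 1
  | .wh _ S => lS S + 1
  | .block _ _ S => (1 + lS S + 1) + 1

def lD (D : Decls) : ℕ := (D.map (fun d => lS d.2.2)).sum

/-- `l(D | S)`. -/
def lProg (D : Decls) (S : Stmt) : ℕ := lD D + lS S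

/-- Number of parallel assignments occurring in `S`
(the initialization of a block counts as a parallel assignment). -/
def na : Stmt → ℕ
  | .skip => 0
  | .assign _ _ => 1
  | .call _ _ => 0
  | .seq S₁ S₂ => na S₁ + na S₂
  | .ifte _ S₁ S₂ => na S₁ + na S₂
  | .wh _ S => na S
  | .block _ _ S => na S + 1

/-- Number of block statements occurring in `S`. -/
def nb : Stmt → ℕ
  | .skip => 0
  | .assign _ _ => 0
  | .call _ _ => 0
  | .seq S₁ S₂ => nb S₁ + nb S₂
  | .ifte _ S₁ S₂ => nb S₁ + nb S₂
  | .wh _ S => nb S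
  | .block _ _ S => nb S + 1

/-- Number of procedure calls occurring in `S`. -/
def np : Stmt → ℕ
  | .skip => 0
  | .assign _ _ => 0
  | .call _ _ => 1
  | .seq S₁ S₂ => np S₁ + np S₂
  | .ifte _ S₁ S₂ => np S₁ + np S₂
  | .wh _ S => np S
  | .block _ _ S => np S

/-- Number of while loops occurring in `S`. -/
def nw : Stmt → ℕ
  | .skip => 0
  | .assign _ _ => 0
  | .call _ _ => 0
  | .seq S₁ S₂ => nw S₁ + nw S₂
  | .ifte _ S₁ S₂ => nw S₁ + nw S₂
  | .wh _ S => nw S + 1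
  | .block _ _ S => nw S

/-- `m(S) = l(S) + n_a(S) + 3·n_b(S) + 6·n_p(S) + n_w(S)`. -/
def mSize (S : Stmt) : ℕ := lS S + na S + 3 * nb S + 6 * np S + nw S

/-! Local and global occurrences, clash-freeness -/

/-- Variables having a local occurrence in a statement. -/
def localsS : Stmt → List Var
  | .skip => []
  | .assign _ _ => []
  | .call _ _ => []
  | .seq S₁ S₂ => localsS S₁ ++ localsS S₂
  | .ifte _ S₁ S₂ => localsS S₁ ++ localsS S₂
  | .wh _ S => localsS S
  | .block xs _ S => xs ++ varsS S

/-- Variables having a local occurrence in the program `(D | S)`. -/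
def localsProg (D : Decls) (S : Stmt) : List Var :=
  localsS S ++ D.flatMap (fun d => d.2.1 ++ localsS d.2.2)

/-- Variables having a global occurrence in a statement. -/
def globalsS : Stmt → List Var
  | .skip => []
  | .assign xs ts => xs ++ varsEs ts
  | .call _ ts => varsEs ts
  | .seq S₁ S₂ => globalsS S₁ ++ globalsS S₂
  | .ifte B S₁ S₂ => varsA B ++ globalsS S₁ ++ globalsS S₂
  | .wh B S => varsA B ++ globalsS S
  | .block _ ts _ => varsEs ts

/-- A program is clash-free if no variable has both a local occurrence in it and
a global occurrence in a procedure body. -/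
def ClashFree (D : Decls) (S : Stmt) : Prop :=
  ∀ x ∈ localsProg D S, ∀ d ∈ D, x ∉ globalsS d.2.2

/-- `Repl P ts B S₁ S₂`: `S₂` results from `S₁` by replacing one occurrence of
the procedure call `P(t̄)` by the statement `B`. -/
inductive Repl (P : PName) (ts : List Expr) (B : Stmt) : Stmt → Stmt → Prop
  | here : Repl P ts B (.call P ts) B
  | seqL {S₁ S₁' S₂} : Repl P ts B S₁ S₁' → Repl P ts B (.seq S₁ S₂) (.seq S₁' S₂)
  | seqR {S₁ S₂ S₂'} : Repl P ts B S₂ S₂' → Repl P ts B (.seq S₁ S₂) (.seq S₁ S₂')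
  | ifteL {C S₁ S₁' S₂} : Repl P ts B S₁ S₁' → Repl P ts B (.ifte C S₁ S₂) (.ifte C S₁' S₂)
  | ifteR {C S₁ S₂ S₂'} : Repl P ts B S₂ S₂' → Repl P ts B (.ifte C S₁ S₂) (.ifte C S₁ S₂')
  | wh {C S S'} : Repl P ts B S S' → Repl P ts B (.wh C S) (.wh C S')
  | block {xs es S S'} : Repl P ts B S S' → Repl P ts B (.block xs es S) (.block xs es S')

/-! Purity -/

/-- All procedure calls in `S` are generic. -/
def PureS (D : Decls) : Stmt → Prop
  | .skip => True
  | .assign _ _ => True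
  | .call P ts => ∃ us B, lookupD D P = some (us, B) ∧ ts = us.map Expr.var
  | .seq S₁ S₂ => PureS D S₁ ∧ PureS D S₂
  | .ifte _ S₁ S₂ => PureS D S₁ ∧ PureS D S₂
  | .wh _ S => PureS D S
  | .block _ _ S => PureS D S

/-- The program `(D | S)` is pure: all procedure calls occurring in it are generic. -/
def PureProg (D : Decls) (S : Stmt) : Prop :=
  PureS D S ∧ ∀ d ∈ D, PureS D d.2.2

/-! Equality of states and sets of states modulo a set of variables -/

/-- `σ = τ mod Z`. -/
def eqMod {α : Type _} (Z : List Var) (σ τ : Var → α) : Prop :=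
  ∀ x, x ∉ Z → σ x = τ x

/-- `X = Y mod Z`, for sets of states. -/
def setEqMod {α : Type _} (Z : List Var) (X Y : Set (Var → α)) : Prop :=
  (∀ σ ∈ X, ∃ τ ∈ Y, eqMod Z σ τ) ∧ (∀ τ ∈ Y, ∃ σ ∈ X, eqMod Z σ τ)


/-! Auxiliary lemmas -/

theorem updList_notMem {α : Type _} (σ : Var → α) :
    ∀ (xs : List Var) (ds : List α) (y : Var), y ∉ xs → updList σ xs ds y = σ y
  | [], _, y, _ => rfl
  | x :: xs, [], y, _ => rfl
  | x :: xs, d :: ds, y, h => by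
    have hx : y ≠ x := fun he => h (he ▸ (List.mem_cons_self (a := x) (l := xs)))
    simp [updList, Function.update, hx]
    exact updList_notMem σ xs ds y (fun hy => h (List.mem_cons_of_mem _ hy))

theorem updList_map_self {α : Type _} (σ : Var → α) (g : Var → α) :
    ∀ (xs : List Var) (y : Var),
      updList σ xs (xs.map g) y = if y ∈ xs then g y else σ y
  | [], y => by simp [updList]
  | x :: xs, y => by
    by_cases hx : y = x
    · subst hx
      simp [updList, Function.update]
    · simp only [updList, List.map_cons, Function.update, eq_rec_constant, dite_eq_ite, hx,
        if_false, updList_map_self σ g xs y, List.mem_cons]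
      by_cases h : y ∈ xs <;> simp [h, hx]

theorem satA_exList_elim (I : Interp) :
    ∀ (us : List Var) (r : Assertion) (σ : I.State), satA I σ (exList us r) →
      ∃ σ' : I.State, satA I σ' r ∧ ∀ y, y ∉ us → σ' y = σ y
  | [], r, σ, h => ⟨σ, h, fun _ _ => rfl⟩
  | u :: us, r, σ, h => by
    obtain ⟨d, hd⟩ := h
    obtain ⟨σ', h1, h2⟩ := satA_exList_elim I us r _ hd
    refine ⟨σ', h1, fun y hy => ?_⟩
    have hyu : y ≠ u := fun he => hy (he ▸ (List.mem_cons_self (a := u) (l := us)))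
    have := h2 y (fun h' => hy (List.mem_cons_of_mem _ h'))
    rwa [Function.update_of_ne hyu] at this

theorem satA_eqVars (I : Interp) (σ : I.State) :
    ∀ (xs zs : List Var), xs.length = zs.length → satA I σ (eqVars xs zs) →
      xs.map σ = zs.map σ
  | [], [], _, _ => rfl
  | x :: xs, z :: zs, hl, h => by
    obtain ⟨h1, h2⟩ := h
    simp only [List.map_cons]
    rw [satA_eqVars I σ xs zs (by simpa using hl) h2]
    simpa [satA, evalE] using h1

theorem satA_eqExprVars (I : Interp) (σ : I.State) :
    ∀ (ts : List Expr) (vs : List Var), ts.length = vs.length →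
      satA I σ (eqExprVars ts vs) → evalEs I σ ts = vs.map σ
  | [], [], _, _ => rfl
  | t :: ts, v :: vs, hl, h => by
    obtain ⟨h1, h2⟩ := h
    simp only [evalEs, List.map_cons]
    rw [show ts.map (evalE I σ) = evalEs I σ ts from rfl,
      satA_eqExprVars I σ ts vs (by simpa using hl) h2]
    simpa [satA, evalE] using h1

theorem varsA_eqExprVars :
    ∀ (ts : List Expr) (vs : List Var) (x : Var), x ∈ varsA (eqExprVars ts vs) →
      x ∈ varsEs ts ∨ x ∈ vs
  | [], _, x, h => by simp [eqExprVars, varsA] at h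
  | t :: ts, [], x, h => by simp [eqExprVars, varsA] at h
  | t :: ts, v :: vs, x, h => by
    simp only [eqExprVars, List.zip_cons_cons, List.map_cons, List.foldr_cons, varsA,
      List.mem_append] at h
    rcases h with (h | h) | h
    · exact Or.inl (by simp [varsEs, List.mem_flatMap]; exact Or.inl h)
    · simp [varsE] at h; exact Or.inr (by simp [h])
    · rcases varsA_eqExprVars ts vs x h with h' | h'
      · exact Or.inl (by simp [varsEs] at h' ⊢; exact Or.inr h')
      · exact Or.inr (List.mem_cons_of_mem _ h')
theorem evalE_fn (I : Interp) (σ : I.State) (f : ℕ) (ts : List Expr) :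
    evalE I σ (.fn f ts) = I.fn f (ts.map (evalE I σ)) := by
  rw [evalE]
  congr 1
  simp [List.attach_map_val]

theorem varsE_fn (f : ℕ) (ts : List Expr) :
    varsE (.fn f ts) = ts.flatMap varsE := by
  rw [varsE]
  simp [List.flatMap, List.attach_map_val]

theorem evalE_congr (I : Interp) (σ σ' : I.State) :
    ∀ e : Expr, (∀ x ∈ varsE e, σ x = σ' x) → evalE I σ e = evalE I σ' e
  | .var x, h => by simp only [evalE]; exact h x (by simp [varsE])
  | .fn f ts, h => by
    rw [evalE_fn, evalE_fn]
    congr 1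
    apply List.map_congr_left
    intro t ht
    exact evalE_congr I σ σ' t (fun x hx => h x (by
      rw [varsE_fn]; exact List.mem_flatMap.mpr ⟨t, ht, hx⟩))
decreasing_by
  have := List.sizeOf_lt_of_mem ht
  simp only [Expr.fn.sizeOf_spec]
  omega

theorem substE_fn (m : Var → Option Expr) (f : ℕ) (ts : List Expr) :
    substE m (.fn f ts) = .fn f (ts.map (substE m)) := by
  rw [substE]
  congr 1
  simp [List.attach_map_val]

theorem evalE_substE (I : Interp) (m : Var → Option Expr) (σ σ' : I.State)
    (h : ∀ y, evalE I σ ((m y).getD (.var y)) = σ' y) :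
    ∀ e : Expr, evalE I σ (substE m e) = evalE I σ' e
  | .var x => by
    have := h x
    simpa [substE, evalE] using this
  | .fn f ts => by
    rw [substE_fn, evalE_fn, evalE_fn, List.map_map]
    congr 1
    apply List.map_congr_left
    intro t ht
    exact evalE_substE I m σ σ' h t
decreasing_by
  have := List.sizeOf_lt_of_mem ht
  simp only [Expr.fn.sizeOf_spec]
  omega

theorem subMap_eval (I : Interp) (τ : I.State) :
    ∀ (xs zs : List Var) (y : Var),
      evalE I τ ((subMap xs (zs.map .var) y).getD (.var y)) =
        updList τ xs (zs.map τ) y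
  | [], zs, y => by simp [subMap, updList, evalE]
  | x :: xs, [], y => by simp [subMap, updList, evalE]
  | x :: xs, z :: zs, y => by
    by_cases hx : x = y
    · subst hx
      simp [subMap, updList, Function.update, evalE]
    · have hb : (x == y) = false := beq_false_of_ne hx
      simp only [List.map_cons, subMap, List.zip_cons_cons, List.find?_cons, hb,
        updList, Function.update, eq_rec_constant, dite_eq_ite, if_neg (Ne.symm hx)]
      exact subMap_eval I τ xs zs y

theorem subMap_vars :
    ∀ (xs zs : List Var) (y : Var) (e : Expr),
      subMap xs (zs.map .var) y = some e → ∃ z ∈ zs, e = .var z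
  | [], zs, y, e, h => by simp [subMap] at h
  | x :: xs, [], y, e, h => by simp [subMap] at h
  | x :: xs, z :: zs, y, e, h => by
    by_cases hx : x = y
    · subst hx
      simp only [List.map_cons, subMap, List.zip_cons_cons, List.find?_cons,
        beq_self_eq_true, Option.map_some] at h
      simp at h
      exact ⟨z, by simp, h.symm⟩
    · have hb : (x == y) = false := beq_false_of_ne hx
      simp only [List.map_cons, subMap, List.zip_cons_cons, List.find?_cons, hb] at h
      obtain ⟨z', hz', he⟩ := subMap_vars xs zs y e h
      exact ⟨z', List.mem_cons_of_mem _ hz', he⟩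
theorem satA_substA (I : Interp) :
    ∀ (r : Assertion) (m : Var → Option Expr) (σ σ' : I.State),
      (∀ y, evalE I σ ((m y).getD (.var y)) = σ' y) →
      (∀ y e, m y = some e → ∀ x ∈ varsE e, x ∉ varsA r) →
      (satA I σ (substA m r) ↔ satA I σ' r)
  | .tru, m, σ, σ', h, hv => by simp [substA, satA]
  | .eq a b, m, σ, σ', h, hv => by
    simp only [substA, satA, evalE_substE I m σ σ' h]
  | .rel n ts, m, σ, σ', h, hv => by
    simp only [substA, satA, evalEs, List.map_map]
    rw [show (evalE I σ ∘ substE m) = (fun t => evalE I σ (substE m t)) from rfl,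
      List.map_congr_left (fun t _ => evalE_substE I m σ σ' h t)]
  | .not p, m, σ, σ', h, hv =>
    not_congr (satA_substA I p m σ σ' h
      (fun y e he x hx => hv y e he x hx))
  | .and p1 p2, m, σ, σ', h, hv => by
    simp only [substA, satA]
    exact and_congr
      (satA_substA I p1 m σ σ' h (fun y e he x hx hx' =>
        hv y e he x hx (by simp [varsA, hx'])))
      (satA_substA I p2 m σ σ' h (fun y e he x hx hx' =>
        hv y e he x hx (by simp [varsA, hx'])))
  | .ex x p, m, σ, σ', h, hv => by
    simp only [substA, satA]
    apply exists_congr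
    intro d
    apply satA_substA I p (fun y => if y = x then none else m y)
    · intro y
      by_cases hyx : y = x
      · subst hyx
        simp [evalE, Function.update]
      · simp only [if_neg hyx]
        rw [Function.update_of_ne hyx]
        cases hm : m y with
        | none =>
          simp only [Option.getD_none]
          rw [show evalE I (Function.update σ x d) (.var y) = σ y by
            simp [evalE, Function.update, hyx]]
          have := h y; rw [hm] at this; simpa [evalE] using this
        | some e =>
          simp only [Option.getD_some]
          have hx : x ∉ varsE e := fun hx' =>
            hv y e hm x hx' (by simp [varsA])
          rw [evalE_congr I (Function.update σ x d) σ e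
            (fun w hw => Function.update_of_ne (fun hwx : w = x => hx (hwx ▸ hw)) _ _)]
          have := h y; rw [hm] at this; simpa using this
    · intro y e he w hw
      by_cases hyx : y = x
      · simp [hyx] at he
      · rw [if_neg hyx] at he
        exact fun hw' => hv y e he w hw (by simp [varsA, hw'])
theorem lookupD_mem {D : Decls} {P : PName} {r : List Var × Stmt}
    (h : lookupD D P = some r) : ∃ d ∈ D, d.2 = r := by
  unfold lookupD at h
  rw [Option.map_eq_some_iff] at h
  obtain ⟨d, hd, hdr⟩ := h
  exact ⟨d, List.mem_of_find?_eq_some hd, hdr⟩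

theorem chgNo_subset_changeD {D : Decls} {P : PName} {us : List Var} {S : Stmt}
    (h : lookupD D P = some (us, S)) : ∀ y ∈ chgNo S, y ∈ changeD D := by
  obtain ⟨d, hd, hdr⟩ := lookupD_mem h
  intro y hy
  exact List.mem_flatMap.mpr ⟨d, hd, by rw [show d.2.2 = S from congrArg Prod.snd hdr ▸ rfl]; exact hy⟩

theorem bigStep_eqOff {D : Decls} {I : Interp} {S : Stmt} {σ τ : I.State}
    (h : BigStep D I S σ τ) :
    ∀ y, y ∉ chgNo S → y ∉ changeD D → σ y = τ y := by
  induction h with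
  | skip => intro y _ _; rfl
  | @assign xs es σ =>
    intro y hy _
    exact (updList_notMem σ xs _ y (by simpa [chgNo] using hy)).symm
  | seq _ _ ih1 ih2 =>
    intro y hy hD
    simp only [chgNo, List.mem_append] at hy
    exact (ih1 y (fun h => hy (Or.inl h)) hD).trans (ih2 y (fun h => hy (Or.inr h)) hD)
  | ifteT _ _ ih =>
    intro y hy hD
    simp only [chgNo, List.mem_append] at hy
    exact ih y (fun h => hy (Or.inl h)) hD
  | ifteF _ _ ih =>
    intro y hy hD
    simp only [chgNo, List.mem_append] at hy
    exact ih y (fun h => hy (Or.inr h)) hD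
  | whT _ _ _ ih1 ih2 =>
    intro y hy hD
    simp only [chgNo] at hy
    exact (ih1 y hy hD).trans (ih2 y (by simpa [chgNo] using hy) hD)
  | whF => intro y _ _; rfl
  | @block xs es S' σ' τ' _ ih =>
    intro y hy hD
    by_cases hyx : y ∈ xs
    · rw [updList_map_self, if_pos hyx]
    · rw [updList_notMem _ _ _ _ hyx]
      apply ih y _ hD
      simp only [chgNo, List.mem_append]
      rintro (h | h)
      · exact hyx h
      · apply hy
        simp only [chgNo, List.mem_filter]
        exact ⟨h, by simp [hyx]⟩
  | @call P' us' S' ts' σ' τ' hlook _ ih =>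
    intro y _ hD
    apply ih y _ hD
    simp only [chgNo, List.mem_filter]
    rintro ⟨h1, _⟩
    exact hD (chgNo_subset_changeD hlook y h1)
/-- `I ⊨ (Inv ∧ ∃ū: SP_I(x̄=z̄ ∧ ū=v̄, S)) → q`,
where `Inv ≡ (p ∧ t̄=v̄)[x̄:=z̄]`. -/
theorem inv_sp_implies_post (I : Interp) (D : Decls) (hwf : Decls.Wf D)
    (hexp : Expressive I D)
    (P : PName) (us : List Var) (S : Stmt)
    (hP : lookupD D P = some (us, S)) (hus : us.Nodup)
    (ts : List Expr) (hlen : ts.length = us.length)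
    (p q : Assertion)
    (hpq : HoareValid D I p (.call P ts) q)
    (xs vs zs : List Var) (SP : Assertion)
    (hxs : xs.Nodup)
    (hxschg : ∀ x, x ∈ xs ↔ (x ∈ changeD D ∧ x ∉ us))
    (hvlen : vs.length = us.length) (hzlen : zs.length = xs.length)
    (hnodup : (vs ++ zs).Nodup)
    (hfresh : ∀ v ∈ vs ++ zs,
      v ∉ varsD D ∧ v ∉ varsS S ∧ v ∉ varsEs ts ∧
      v ∉ varsA p ∧ v ∉ varsA q ∧ v ∉ us ∧ v ∉ xs)
    (hSP : DefinesSP I D SP (.and (eqVars xs zs) (eqVars us vs)) S) :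
    valid I (Assertion.imp
      (.and (substList (.and p (eqExprVars ts vs)) xs (zs.map .var))
            (exList us SP))
      q) := by

  intro τ
  rintro ⟨⟨hInv, hEx⟩, hq⟩
  apply hq
  -- basic facts
  have hdisj : ∀ z ∈ zs, z ∉ vs := by
    intro z hz hv
    exact (List.disjoint_of_nodup_append hnodup) hv hz
  have hfreshv : ∀ v ∈ vs, v ∉ varsD D ∧ v ∉ varsS S ∧ v ∉ varsEs ts ∧
      v ∉ varsA p ∧ v ∉ varsA q ∧ v ∉ us ∧ v ∉ xs :=
    fun v hv => hfresh v (List.mem_append_left _ hv)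
  have hfreshz : ∀ z ∈ zs, z ∉ varsD D ∧ z ∉ varsS S ∧ z ∉ varsEs ts ∧
      z ∉ varsA p ∧ z ∉ varsA q ∧ z ∉ us ∧ z ∉ xs :=
    fun z hz => hfresh z (List.mem_append_right _ hz)
  have hxsus : ∀ u ∈ us, u ∉ xs := fun u hu hx => ((hxschg u).mp hx).2 hu
  have hchg_sub : ∀ y, y ∈ changeD D → y ∈ xs ∨ y ∈ us := by
    intro y hy
    by_cases h : y ∈ us
    · exact Or.inr h
    · exact Or.inl ((hxschg y).mpr ⟨hy, h⟩)
  have hlen' : ts.length = vs.length := hlen.trans hvlen.symm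
  set τ₁ : I.State := updList τ xs (zs.map τ) with hτ₁def
  -- Step 1: the substitution lemma
  have hsub : satA I τ₁ (.and p (eqExprVars ts vs)) := by
    refine (satA_substA I (.and p (eqExprVars ts vs)) (subMap xs (zs.map .var)) τ τ₁
      (fun y => subMap_eval I τ xs zs y) ?_).mp hInv
    intro y e he x hx
    obtain ⟨z, hz, rfl⟩ := subMap_vars xs zs y e he
    have hxz : x = z := by simpa [varsE] using hx
    subst hxz
    simp only [varsA, List.mem_append]
    rintro (h | h)
    · exact (hfreshz x hz).2.2.2.1 h
    · rcases varsA_eqExprVars ts vs x h with h' | h'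
      · exact (hfreshz x hz).2.2.1 h'
      · exact hdisj x hz h'
  obtain ⟨hp1, heq⟩ := hsub
  have hvsτ₁ : vs.map τ₁ = vs.map τ :=
    List.map_congr_left fun v hv =>
      updList_notMem τ xs (zs.map τ) v ((hfreshv v hv).2.2.2.2.2.2)
  have hevalts : evalEs I τ₁ ts = vs.map τ :=
    (satA_eqExprVars I τ₁ ts vs hlen' heq).trans hvsτ₁
  -- Step 2: the strongest postcondition
  obtain ⟨σh, hσhSP, hσhoff⟩ := satA_exList_elim I us SP τ hEx
  obtain ⟨σ, hσpre, hstep⟩ := (hSP σh).mp hσhSP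
  obtain ⟨hσxz, hσuv⟩ := hσpre
  have hmapxz : xs.map σ = zs.map σ := satA_eqVars I σ xs zs hzlen.symm hσxz
  have hmapuv : us.map σ = vs.map σ := satA_eqVars I σ us vs hvlen.symm hσuv
  have hσeqτ : ∀ y, y ∉ xs → y ∉ us → σ y = τ y := by
    intro y hyx hyu
    have hyc : y ∉ changeD D := fun h => (hchg_sub y h).elim hyx hyu
    have h1 : σ y = σh y :=
      bigStep_eqOff hstep y (fun h => hyc (chgNo_subset_changeD hP y h)) hyc
    exact h1.trans (hσhoff y hyu)
  have hzsστ : zs.map σ = zs.map τ := List.map_congr_left fun z hz =>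
    hσeqτ z ((hfreshz z hz).2.2.2.2.2.2) ((hfreshz z hz).2.2.2.2.2.1)
  have hvsστ : vs.map σ = vs.map τ := List.map_congr_left fun v hv =>
    hσeqτ v ((hfreshv v hv).2.2.2.2.2.2) ((hfreshv v hv).2.2.2.2.2.1)
  have hτ₁alt : τ₁ = updList τ xs (xs.map σ) := by
    rw [hτ₁def, ← hzsστ, ← hmapxz]
  -- Step 3: σ is the state after the initialization of the call from τ₁
  set ρ₀ : I.State := updList τ₁ us (evalEs I τ₁ ts) with hρ₀def
  have hρ₀alt : ρ₀ = updList τ₁ us (us.map σ) := by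
    rw [hρ₀def, hevalts, ← hvsστ, ← hmapuv]
  have hσρ : σ = ρ₀ := by
    funext y
    rw [hρ₀alt]
    by_cases hyu : y ∈ us
    · rw [updList_map_self, if_pos hyu]
    · rw [updList_notMem _ _ _ _ hyu, hτ₁alt, updList_map_self]
      by_cases hyx : y ∈ xs
      · rw [if_pos hyx]
      · rw [if_neg hyx]
        exact hσeqτ y hyx hyu
  -- Step 4: assemble the computation of the call
  have hstep' : BigStep D I S (updList τ₁ us (evalEs I τ₁ ts)) σh := by
    rw [← hρ₀def, ← hσρ]; exact hstep
  have hcall : BigStep D I (.call P ts) τ₁ (updList σh us (us.map τ₁)) :=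
    .call hP (.block (.seq .assign hstep'))
  have hqfin : satA I (updList σh us (us.map τ₁)) q := hpq τ₁ _ hp1 hcall
  have hfinal : updList σh us (us.map τ₁) = τ := by
    funext y
    by_cases hyu : y ∈ us
    · rw [updList_map_self, if_pos hyu, hτ₁def]
      exact updList_notMem τ xs (zs.map τ) y (hxsus y hyu)
    · rw [updList_notMem _ _ _ _ hyu]
      exact hσhoff y hyu
  rwa [hfinal] at hqfin
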